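/- arXiv:0903.1005 — 3 statements merged into one kernel-verified Lean document; each statement's English description precedes it below -/
import Mathlib

section
/- Let f : S → T be a map between topological spaces, σ a measure on the Borel σ-algebra of S whose set of discontinuity points D of f satisfies σ(D) = 0, and B a Borel subset of T such that the pushforward measure μ = σ ∘ f⁻¹ satisfies μ(∂B) = 0. Then σ(∂(f⁻¹(B))) = 0. -/
open Set Topology MeasureTheory

theorem ContinuousAt.mem_frontier_of_mem_frontier_preimage {X Y : Type*} [TopologicalSpace X]
    [TopologicalSpace Y] {f : X → Y} {x : X} {t : Set Y} (hf : ContinuousAt f x)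
    (hx : x ∈ frontier (f ⁻¹' t)) : f x ∈ frontier t := by
  rw [frontier_eq_closure_inter_closure, ← preimage_compl] at hx
  rw [frontier_eq_closure_inter_closure]
  exact ⟨hf.continuousWithinAt.mem_closure hx.1 (mapsTo_preimage f t),
    hf.continuousWithinAt.mem_closure hx.2 (mapsTo_preimage f tᶜ)⟩

theorem frontier_preimage_subset_preimage_frontier_union {X Y : Type*} [TopologicalSpace X]
    [TopologicalSpace Y] (f : X → Y) (t : Set Y) :
    frontier (f ⁻¹' t) ⊆ f ⁻¹' frontier t ∪ {x | ¬ContinuousAt f x} := fun _ hx =>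
  or_iff_not_imp_right.2 fun hc => (not_not.1 hc).mem_frontier_of_mem_frontier_preimage hx

theorem measure_frontier_preimage_le {X Y : Type*} [TopologicalSpace X] [MeasurableSpace X]
    [TopologicalSpace Y] [MeasurableSpace Y] [OpensMeasurableSpace Y] (μ : Measure X)
    {f : X → Y} (hf : Measurable f) (t : Set Y) :
    μ (frontier (f ⁻¹' t)) ≤ μ.map f (frontier t) + μ {x | ¬ContinuousAt f x} := by
  rw [Measure.map_apply hf isClosed_frontier.measurableSet]
  exact (measure_mono (frontier_preimage_subset_preimage_frontier_union f t)).trans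
    (measure_union_le _ _)

theorem sigma_frontier_preimage_eq_zero_general
    {S T : Type*} [TopologicalSpace S] [MeasurableSpace S]
    [TopologicalSpace T] [MeasurableSpace T] [BorelSpace T]
    (σ : Measure S) (f : S → T) (hf : Measurable f)
    (hD : σ {x : S | ¬ ContinuousAt f x} = 0)
    (B : Set T)
    (hμ : Measure.map f σ (frontier B) = 0) :
    σ (frontier (f ⁻¹' B)) = 0 :=
  nonpos_iff_eq_zero.1 <| by simpa [hμ, hD] using measure_frontier_preimage_le σ hf B

/-- If `σ` is a Borel measure on `S` giving measure zero to the set of discontinuity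
points of a measurable map `f : S → T`, and `B` is a Borel set in `T` whose frontier is
null for the pushforward measure `μ = σ ∘ f⁻¹`, then the frontier of `f ⁻¹' B` is
`σ`-null. -/
theorem sigma_frontier_preimage_eq_zero
    {S T : Type*} [TopologicalSpace S] [MeasurableSpace S] [BorelSpace S]
    [TopologicalSpace T] [MeasurableSpace T] [BorelSpace T]
    (σ : Measure S) (f : S → T) (hf : Measurable f)
    (hD : σ {x : S | ¬ ContinuousAt f x} = 0)
    (B : Set T) (hB : MeasurableSet B)
    (hμ : Measure.map f σ (frontier B) = 0) :
    σ (frontier (f ⁻¹' B)) = 0 :=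
  sigma_frontier_preimage_eq_zero_general σ f hf hD B hμ
end

section
/- Let X be a random vector in ℝ^d whose tail is regularly varying with index α > 0 and spectral measure σ, in the sense that the measures Q_n defined by Q_n((r,∞) × B) = n · P(X/‖X‖ ∈ B, ‖X‖ > r b_n) converge vaguely on (0,∞) × S^{d-1} to Q = m_α × σ. Let h : S^{d-1} → [0,∞) be bounded and continuous σ-almost everywhere. Then Y = X · h(X/‖X‖) has a regularly varying tail with the same index α and with spectral measure μ given by dμ/dσ = h^α; i.e., the measures Q̃_n((r,∞) × B) = n · P(Y/‖Y‖ ∈ B, ‖Y‖ > r b_n) converge vaguely to m_α × μ. -/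
open Set Topology MeasureTheory Filter

/-- The measure `m_α` on `(0,∞)` with density `α r^{-α-1}`. -/
noncomputable def mAlpha (α : ℝ) : Measure ℝ :=
  (volume.restrict (Set.Ioi (0 : ℝ))).withDensity
    fun r => ENNReal.ofReal (α * r ^ (-α - 1))

/-- Vague convergence of measures on `(0,∞) × S`: convergence of integrals of all
bounded continuous functions whose support is separated from zero. -/
def VagueTendsto {S : Type*} [TopologicalSpace S] [MeasurableSpace S]
    (Qn : ℕ → Measure (ℝ × S)) (Q : Measure (ℝ × S)) : Prop :=
  ∀ f : ℝ × S → ℝ, Continuous f → (∃ C : ℝ, ∀ p, |f p| ≤ C) →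
    (∃ ε > 0, ∀ p, f p ≠ 0 → ε < p.1) →
    Tendsto (fun n => ∫ p, f p ∂(Qn n)) atTop (nhds (∫ p, f p ∂Q))


/-! The map `T (r, θ) = (r h(θ), θ)` pushes `Q_n` forward to `Q̃_n`, so
`∫ f dQ̃_n = ∫ f ∘ T dQ_n`. For a test function `f`, `f ∘ T` is bounded, vanishes for
`r ≤ ε / sup h`, and is continuous off `ℝ × {h discontinuous}`, a `Q`-null set. Vague convergence
extends to such functions: after adding a continuous cutoff they are nonnegative, and then they
are increasing limits of their Lipschitz inf-convolutions, which are admissible test functions.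
Finally the scaling `∫ ψ (r c) dm_α(r) = c^α ∫ ψ dm_α` turns `∫ f ∘ T dQ` into
`∫ f d(m_α × μ)`. -/

lemma integrable_of_bounded_of_lt_fst {S : Type*} [MeasurableSpace S] {Q : Measure (ℝ × S)}
    {G : ℝ × S → ℝ} {C ε : ℝ} (hGm : Measurable G) (hGC : ∀ p, |G p| ≤ C)
    (hG : ∀ p, G p ≠ 0 → ε < p.1) (hQ : Q {p | ε < p.1} ≠ ⊤) : Integrable G Q :=
  (IntegrableOn.of_bound hQ.lt_top hGm.aestronglyMeasurable C
    (ae_of_all _ fun p => hGC p)).integrable_of_forall_notMem_eq_zero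
    fun p hp => not_not.1 fun hne => hp (hG p hne)

instance (α : ℝ) : SigmaFinite (mAlpha α) := by
  unfold mAlpha; infer_instance

lemma mAlpha_Ioi_ne_top {α ε : ℝ} (hα : 0 < α) (hε : 0 < ε) : mAlpha α (Ioi ε) ≠ ⊤ := by
  rw [mAlpha, withDensity_apply _ measurableSet_Ioi, Measure.restrict_restrict measurableSet_Ioi,
    inter_eq_left.mpr (Ioi_subset_Ioi hε.le)]
  exact ((integrableOn_Ioi_rpow_of_lt (by linarith) hε).const_mul α).lintegral_lt_top.ne

lemma mAlpha_prod_lt_fst_ne_top {S : Type*} [MeasurableSpace S] {α ε : ℝ} (hα : 0 < α)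
    (hε : 0 < ε) (σ : Measure S) [IsFiniteMeasure σ] :
    (mAlpha α).prod σ {p | ε < p.1} ≠ ⊤ := by
  rw [show {p : ℝ × S | ε < p.1} = Ioi ε ×ˢ univ by ext; simp, Measure.prod_prod]
  exact ENNReal.mul_ne_top (mAlpha_Ioi_ne_top hα hε) (measure_ne_top σ _)

lemma integral_mAlpha {α : ℝ} (hα : 0 ≤ α) (φ : ℝ → ℝ) :
    ∫ r, φ r ∂mAlpha α = ∫ r in Ioi 0, φ r * (α * r ^ (-α - 1)) := by
  rw [mAlpha, integral_withDensity_eq_integral_toReal_smul (by fun_prop)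
    (ae_of_all _ fun _ => ENNReal.ofReal_lt_top)]
  refine setIntegral_congr_fun measurableSet_Ioi fun r (hr : 0 < r) => ?_
  rw [ENNReal.toReal_ofReal (by positivity), smul_eq_mul, mul_comm]

lemma integral_mAlpha_comp_mul_right {α : ℝ} (hα : 0 < α) {ψ : ℝ → ℝ} (hψ : ψ 0 = 0) {c : ℝ}
    (hc : 0 ≤ c) : ∫ r, ψ (r * c) ∂mAlpha α = c ^ α * ∫ r, ψ r ∂mAlpha α := by
  rcases hc.eq_or_lt with rfl | hc
  · simp [hψ, Real.zero_rpow hα.ne']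
  set F : ℝ → ℝ := fun s => ψ s * (α * s ^ (-α - 1))
  have hF : ∀ r ∈ Ioi (0 : ℝ), ψ (r * c) * (α * r ^ (-α - 1)) = c ^ (α + 1) * F (r * c) := by
    intro r (hr : 0 < r)
    have hc' : c ^ (α + 1) * c ^ (-α - 1) = 1 := by
      rw [← Real.rpow_add hc, show α + 1 + (-α - 1) = 0 by ring, Real.rpow_zero]
    simp only [F, Real.mul_rpow hr.le hc.le]
    linear_combination -ψ (r * c) * α * r ^ (-α - 1) * hc'
  rw [integral_mAlpha hα.le, integral_mAlpha hα.le, setIntegral_congr_fun measurableSet_Ioi hF,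
    integral_const_mul, integral_comp_mul_right_Ioi F 0 hc, zero_mul, smul_eq_mul,
    Real.rpow_add hc, Real.rpow_one, mul_assoc, mul_inv_cancel_left₀ hc.ne']

section LipschitzMinorant

variable {E : Type*} [PseudoMetricSpace E] {G : E → ℝ}

noncomputable def lipschitzMinorant (G : E → ℝ) (k : ℕ) (x : E) : ℝ :=
  ⨅ y, G y + k * dist x y

variable (hG : ∀ y, 0 ≤ G y)
include hG

lemma bddBelow_range_add_mul_dist (k : ℕ) (x : E) :
    BddBelow (range fun y => G y + k * dist x y) :=
  ⟨0, forall_mem_range.2 fun y => add_nonneg (hG y) (by positivity)⟩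

lemma lipschitzMinorant_nonneg (k : ℕ) (x : E) : 0 ≤ lipschitzMinorant G k x :=
  have : Nonempty E := ⟨x⟩
  le_ciInf fun y => add_nonneg (hG y) (by positivity)

lemma lipschitzMinorant_le (k : ℕ) (x : E) : lipschitzMinorant G k x ≤ G x := by
  simpa [lipschitzMinorant] using ciInf_le (bddBelow_range_add_mul_dist hG k x) x

lemma monotone_lipschitzMinorant (x : E) : Monotone fun k => lipschitzMinorant G k x := by
  have : Nonempty E := ⟨x⟩
  intro j k hjk
  refine le_ciInf fun y => (ciInf_le (bddBelow_range_add_mul_dist hG j x) y).trans ?_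
  gcongr

lemma lipschitzWith_lipschitzMinorant (k : ℕ) : LipschitzWith k (lipschitzMinorant G k) := by
  refine LipschitzWith.of_le_add_mul _ fun x z => ?_
  have : Nonempty E := ⟨x⟩
  rw [lipschitzMinorant, ← sub_le_iff_le_add]
  refine le_ciInf fun y => ?_
  have hxy := ciInf_le (bddBelow_range_add_mul_dist hG k x) y
  have htri := dist_triangle x z y
  push_cast
  nlinarith [(k.cast_nonneg : (0 : ℝ) ≤ k)]

lemma lipschitzMinorant_eq_zero {k : ℕ} {x : E} (hx : G x = 0) : lipschitzMinorant G k x = 0 :=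
  le_antisymm (hx ▸ lipschitzMinorant_le hG k x) (lipschitzMinorant_nonneg hG k x)

lemma tendsto_lipschitzMinorant {x : E} (hx : ContinuousAt G x) :
    Tendsto (fun k => lipschitzMinorant G k x) atTop (𝓝 (G x)) := by
  have : Nonempty E := ⟨x⟩
  refine tendsto_order.2 ⟨fun a ha => ?_, fun a ha => .of_forall fun k =>
    (lipschitzMinorant_le hG k x).trans_lt ha⟩
  -- near `x`, `G > (a + G x) / 2`; far from `x`, the penalty `k * dist x y` exceeds `G x`
  obtain ⟨r, hr, hball⟩ := Metric.continuousAt_iff.1 hx ((G x - a) / 2) (by linarith)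
  obtain ⟨K, hK⟩ := exists_nat_ge (G x / r)
  rw [div_le_iff₀ hr] at hK
  filter_upwards [eventually_ge_atTop K] with k hk
  refine lt_of_lt_of_le (by linarith : a < (a + G x) / 2) (le_ciInf fun y => ?_)
  have hk : (K : ℝ) ≤ k := by exact_mod_cast hk
  rcases lt_or_ge (dist y x) r with hy | hy
  · have := (abs_sub_lt_iff.1 (hball hy)).2
    nlinarith [dist_nonneg (x := x) (y := y), (k.cast_nonneg : (0 : ℝ) ≤ k)]
  · rw [dist_comm] at hy
    nlinarith [hG y, (K.cast_nonneg : (0 : ℝ) ≤ K)]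

end LipschitzMinorant

noncomputable def rampCutoff (ε r : ℝ) : ℝ := max 0 (min 1 (2 / ε * r - 1))

lemma continuous_rampCutoff (ε : ℝ) : Continuous (rampCutoff ε) := by
  unfold rampCutoff; fun_prop

lemma rampCutoff_nonneg (ε r : ℝ) : 0 ≤ rampCutoff ε r := le_max_left _ _

lemma rampCutoff_le_one (ε r : ℝ) : rampCutoff ε r ≤ 1 :=
  max_le zero_le_one (min_le_left _ _)

lemma rampCutoff_eq_one {ε : ℝ} (hε : 0 < ε) {r : ℝ} (hr : ε ≤ r) : rampCutoff ε r = 1 := by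
  have : 1 ≤ 2 / ε * r - 1 := by
    rw [div_mul_eq_mul_div, le_sub_iff_add_le, le_div_iff₀ hε]; linarith
  simp [rampCutoff, this]

lemma lt_of_rampCutoff_ne_zero {ε : ℝ} (hε : 0 < ε) {r : ℝ} (hr : rampCutoff ε r ≠ 0) :
    ε / 2 < r := by
  by_contra! hle
  have : 2 / ε * r - 1 ≤ 0 := by
    rw [div_mul_eq_mul_div, sub_nonpos, div_le_one hε]; linarith
  exact hr (max_eq_left ((min_le_right _ _).trans this))

lemma exists_continuous_abs_le_of_lt_fst {S : Type*} [TopologicalSpace S] {G : ℝ × S → ℝ}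
    {C ε : ℝ} (hε : 0 < ε) (hGC : ∀ p, |G p| ≤ C) (hG : ∀ p, G p ≠ 0 → ε < p.1) :
    ∃ χ : ℝ × S → ℝ, Continuous χ ∧ (∀ p, |χ p| ≤ |C|) ∧ (∀ p, χ p ≠ 0 → ε / 2 < p.1) ∧
      ∀ p, |G p| ≤ χ p := by
  refine ⟨fun p => C * rampCutoff ε p.1,
    continuous_const.mul ((continuous_rampCutoff ε).comp continuous_fst), fun p => ?_,
    fun p hp => lt_of_rampCutoff_ne_zero hε (right_ne_zero_of_mul hp), fun p => ?_⟩
  · rw [abs_mul, abs_of_nonneg (rampCutoff_nonneg ε p.1)]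
    exact mul_le_of_le_one_right (abs_nonneg C) (rampCutoff_le_one ε p.1)
  · by_cases hp : G p = 0
    · simpa [hp] using mul_nonneg ((abs_nonneg _).trans (hGC p)) (rampCutoff_nonneg ε p.1)
    · simpa [rampCutoff_eq_one hε (hG p hp).le] using hGC p

section VagueConvergence

variable {S : Type*} [PseudoMetricSpace S] [MeasurableSpace S] [OpensMeasurableSpace S]
  {Qn : ℕ → Measure (ℝ × S)} [∀ n, IsFiniteMeasure (Qn n)] {Q : Measure (ℝ × S)}
  {G : ℝ × S → ℝ} {C ε : ℝ}

lemma VagueTendsto.eventually_lt_integral_of_nonneg (hconv : VagueTendsto Qn Q) (hε : 0 < ε)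
    (hQ : Q {p | ε < p.1} ≠ ⊤) (hGm : Measurable G) (hG0 : ∀ p, 0 ≤ G p) (hGC : ∀ p, G p ≤ C)
    (hG : ∀ p, G p ≠ 0 → ε < p.1) (hGc : ∀ᵐ p ∂Q, ContinuousAt G p) {a : ℝ}
    (ha : a < ∫ p, G p ∂Q) : ∀ᶠ n in atTop, a < ∫ p, G p ∂Qn n := by
  set L := lipschitzMinorant G
  have hL0 k p : 0 ≤ L k p := lipschitzMinorant_nonneg hG0 k p
  have hLC k p : |L k p| ≤ C := by
    rw [abs_of_nonneg (hL0 k p)]; exact (lipschitzMinorant_le hG0 k p).trans (hGC p)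
  have hLcont k : Continuous (L k) := (lipschitzWith_lipschitzMinorant hG0 k).continuous
  have hL k p (hp : L k p ≠ 0) : ε < p.1 :=
    hG p fun h => hp (lipschitzMinorant_eq_zero hG0 h)
  have hLint {ν : Measure (ℝ × S)} (hν : ν {p | ε < p.1} ≠ ⊤) k : Integrable (L k) ν :=
    integrable_of_bounded_of_lt_fst (hLcont k).measurable (hLC k) (hL k) hν
  have hGint {ν : Measure (ℝ × S)} (hν : ν {p | ε < p.1} ≠ ⊤) : Integrable G ν :=
    integrable_of_bounded_of_lt_fst hGm (fun p => (abs_of_nonneg (hG0 p)).trans_le (hGC p))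
      hG hν
  have hmono : Tendsto (fun k => ∫ p, L k p ∂Q) atTop (𝓝 (∫ p, G p ∂Q)) :=
    integral_tendsto_of_tendsto_of_monotone (hLint hQ) (hGint hQ)
      (ae_of_all _ (monotone_lipschitzMinorant hG0))
      (hGc.mono fun p hp => tendsto_lipschitzMinorant hG0 hp)
  obtain ⟨k, hk⟩ := (hmono.eventually (eventually_gt_nhds ha)).exists
  filter_upwards [(hconv (L k) (hLcont k) ⟨C, hLC k⟩ ⟨ε, hε, hL k⟩).eventually
    (eventually_gt_nhds hk)] with n hn
  exact hn.trans_le (integral_mono (hLint (measure_ne_top _ _) k) (hGint (measure_ne_top _ _))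
    (lipschitzMinorant_le hG0 k))

lemma VagueTendsto.eventually_lt_integral (hconv : VagueTendsto Qn Q) (hε : 0 < ε)
    (hQ : ∀ δ > 0, Q {p | δ < p.1} ≠ ⊤) (hGm : Measurable G) (hGC : ∀ p, |G p| ≤ C)
    (hG : ∀ p, G p ≠ 0 → ε < p.1) (hGc : ∀ᵐ p ∂Q, ContinuousAt G p) {a : ℝ}
    (ha : a < ∫ p, G p ∂Q) : ∀ᶠ n in atTop, a < ∫ p, G p ∂Qn n := by
  -- `G + χ` is nonnegative for a continuous majorant `χ ≥ |G|`, whose integrals converge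
  obtain ⟨χ, hχc, hχC, hχ, hGχ⟩ := exists_continuous_abs_le_of_lt_fst hε hGC hG
  have hε2 : 0 < ε / 2 := half_pos hε
  have hGhalf p (hp : G p ≠ 0) : ε / 2 < p.1 := by linarith [hG p hp]
  have hGint {ν : Measure (ℝ × S)} (hν : ν {p | ε / 2 < p.1} ≠ ⊤) : Integrable G ν :=
    integrable_of_bounded_of_lt_fst hGm hGC hGhalf hν
  have hχint {ν : Measure (ℝ × S)} (hν : ν {p | ε / 2 < p.1} ≠ ⊤) : Integrable χ ν :=
    integrable_of_bounded_of_lt_fst hχc.measurable hχC hχ hν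
  have hsum {ν : Measure (ℝ × S)} (hν : ν {p | ε / 2 < p.1} ≠ ⊤) :
      ∫ p, G p + χ p ∂ν = ∫ p, G p ∂ν + ∫ p, χ p ∂ν := integral_add (hGint hν) (hχint hν)
  obtain ⟨d, hd, rfl⟩ : ∃ d > 0, a = ∫ p, G p ∂Q - 2 * d :=
    ⟨(∫ p, G p ∂Q - a) / 2, by linarith, by ring⟩
  have hsum0 p : 0 ≤ G p + χ p := by linarith [neg_abs_le (G p), hGχ p]
  have hsumC p : G p + χ p ≤ 2 * |C| := by
    linarith [le_abs_self (G p), hGC p, le_abs_self C, hχC p, le_abs_self (χ p)]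
  have hsumε p (hp : G p + χ p ≠ 0) : ε / 2 < p.1 := by
    by_contra h
    exact hp (by rw [not_imp_comm.1 (hGhalf p) h, not_imp_comm.1 (hχ p) h, add_zero])
  have hlow := hconv.eventually_lt_integral_of_nonneg (G := fun p => G p + χ p) hε2 (hQ _ hε2)
    (hGm.add hχc.measurable) hsum0 hsumC hsumε (hGc.mono fun p hp => hp.add hχc.continuousAt)
    (a := ∫ p, G p ∂Q + ∫ p, χ p ∂Q - d) (by rw [hsum (hQ _ hε2)]; linarith)
  have hχn := (hconv χ hχc ⟨|C|, hχC⟩ ⟨ε / 2, hε2, hχ⟩).eventually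
    (eventually_lt_nhds (lt_add_of_pos_right (∫ p, χ p ∂Q) hd))
  filter_upwards [hlow, hχn] with n hn hn'
  rw [hsum (measure_ne_top _ _)] at hn
  linarith

lemma VagueTendsto.tendsto_integral_of_ae_continuousAt (hconv : VagueTendsto Qn Q) (hε : 0 < ε)
    (hQ : ∀ δ > 0, Q {p | δ < p.1} ≠ ⊤) (hGm : Measurable G) (hGC : ∀ p, |G p| ≤ C)
    (hG : ∀ p, G p ≠ 0 → ε < p.1) (hGc : ∀ᵐ p ∂Q, ContinuousAt G p) :
    Tendsto (fun n => ∫ p, G p ∂Qn n) atTop (𝓝 (∫ p, G p ∂Q)) := by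
  refine tendsto_order.2 ⟨fun a ha => hconv.eventually_lt_integral hε hQ hGm hGC hG hGc ha,
    fun a ha => ?_⟩
  have := hconv.eventually_lt_integral hε hQ hGm.neg (G := -G) (by simpa using hGC)
    (by simpa using hG) (hGc.mono fun p hp => hp.neg) (a := -a)
    (by simpa [integral_neg] using ha)
  filter_upwards [this] with n hn
  simpa [integral_neg] using hn

end VagueConvergence

section RadialScaling

variable {S : Type*} {h : S → ℝ}

def radialScale (h : S → ℝ) (p : ℝ × S) : ℝ × S := (p.1 * h p.2, p.2)

lemma measurable_radialScale [MeasurableSpace S] (hh : Measurable h) :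
    Measurable (radialScale h) :=
  (measurable_fst.mul (hh.comp measurable_snd)).prodMk measurable_snd

lemma lt_fst_of_comp_radialScale_ne_zero {f : ℝ × S → ℝ} {ε M : ℝ} (hε : 0 ≤ ε)
    (hM : 0 < M) (h0 : ∀ θ, 0 ≤ h θ) (hhM : ∀ θ, h θ ≤ M) (hf : ∀ p, f p ≠ 0 → ε < p.1)
    (p : ℝ × S) (hp : f (radialScale h p) ≠ 0) : ε / M < p.1 := by
  have : ε < p.1 * h p.2 := hf _ hp
  rw [div_lt_iff₀ hM]
  rcases le_or_gt p.1 0 with hp0 | hp0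
  · nlinarith [mul_nonpos_of_nonpos_of_nonneg hp0 (h0 p.2)]
  · exact this.trans_le (mul_le_mul_of_nonneg_left (hhM p.2) hp0.le)

lemma ae_continuousAt_comp_radialScale [TopologicalSpace S] [MeasurableSpace S] (μ : Measure ℝ)
    {ν : Measure S} [SFinite ν] (hh : ν {θ | ¬ContinuousAt h θ} = 0) {f : ℝ × S → ℝ}
    (hf : Continuous f) :
    ∀ᵐ p ∂μ.prod ν, ContinuousAt (fun p => f (radialScale h p)) p := by
  have hnull : μ.prod ν (univ ×ˢ {θ | ¬ContinuousAt h θ}) = 0 := by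
    rw [Measure.prod_prod, hh, mul_zero]
  rw [ae_iff]
  refine measure_mono_null (fun p hp => mem_prod.2
    ⟨mem_univ p.1, show ¬ContinuousAt h p.2 from fun hθ => hp ?_⟩) hnull
  exact hf.continuousAt.comp
    ((continuousAt_fst.mul (hθ.comp continuousAt_snd)).prodMk continuousAt_snd)

lemma integral_comp_radialScale [MeasurableSpace S] {α : ℝ} (hα : 0 < α) (σ : Measure S)
    [IsFiniteMeasure σ] (hh : Measurable h) (h0 : ∀ θ, 0 ≤ h θ) {M : ℝ} (hM : 0 < M)
    (hhM : ∀ θ, h θ ≤ M) {f : ℝ × S → ℝ} (hfm : Measurable f) {C ε : ℝ} (hε : 0 < ε)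
    (hfC : ∀ p, |f p| ≤ C) (hf : ∀ p, f p ≠ 0 → ε < p.1) :
    ∫ p, f (radialScale h p) ∂(mAlpha α).prod σ
      = ∫ p, f p ∂(mAlpha α).prod (σ.withDensity fun θ => ENNReal.ofReal (h θ ^ α)) := by
  set μ := σ.withDensity fun θ => ENNReal.ofReal (h θ ^ α)
  have hhα : Measurable fun θ => h θ ^ α := hh.pow_const α
  have : IsFiniteMeasure μ := isFiniteMeasure_withDensity_ofReal
    (Integrable.of_bound hhα.aestronglyMeasurable (M ^ α) (ae_of_all _ fun θ => by
      rw [Real.norm_of_nonneg (Real.rpow_nonneg (h0 θ) α)]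
      exact Real.rpow_le_rpow (h0 θ) (hhM θ) hα.le)).hasFiniteIntegral
  have hfi : Integrable f ((mAlpha α).prod μ) :=
    integrable_of_bounded_of_lt_fst hfm hfC hf (mAlpha_prod_lt_fst_ne_top hα hε μ)
  have hgi : Integrable (fun p => f (radialScale h p)) ((mAlpha α).prod σ) :=
    integrable_of_bounded_of_lt_fst (hfm.comp (measurable_radialScale hh)) (fun p => hfC _)
      (lt_fst_of_comp_radialScale_ne_zero hε.le hM h0 hhM hf)
      (mAlpha_prod_lt_fst_ne_top hα (div_pos hε hM) σ)
  rw [integral_prod_symm _ hgi, integral_prod_symm _ hfi,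
    integral_withDensity_eq_integral_toReal_smul hhα.ennreal_ofReal
      (ae_of_all _ fun _ => ENNReal.ofReal_lt_top)]
  refine integral_congr_ae (ae_of_all _ fun θ => ?_)
  dsimp only
  rw [ENNReal.toReal_ofReal (Real.rpow_nonneg (h0 θ) α), smul_eq_mul]
  exact integral_mAlpha_comp_mul_right hα (ψ := fun r => f (r, θ))
    (by_contra fun hne => lt_asymm hε (hf _ hne)) (h0 θ)

end RadialScaling

theorem radial_transformation_regularly_varying_general
    {d : ℕ} {Ω : Type*} [MeasurableSpace Ω] (P : Measure Ω) [IsProbabilityMeasure P]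
    (X : Ω → EuclideanSpace ℝ (Fin d)) (hX : Measurable X)
    (Θ : Ω → Metric.sphere (0 : EuclideanSpace ℝ (Fin d)) 1) (hΘmeas : Measurable Θ)
    (σ : Measure (Metric.sphere (0 : EuclideanSpace ℝ (Fin d)) 1)) [IsFiniteMeasure σ]
    (α : ℝ) (hα : 0 < α)
    (b : ℕ → ℝ)
    (hRV : VagueTendsto
      (fun n => Measure.map (fun ω => (‖X ω‖ / b n, Θ ω)) ((n : ENNReal) • P))
      ((mAlpha α).prod σ))
    (h : Metric.sphere (0 : EuclideanSpace ℝ (Fin d)) 1 → ℝ)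
    (hmeas : Measurable h) (hnonneg : ∀ θ, 0 ≤ h θ)
    (hbdd : ∃ M : ℝ, ∀ θ, h θ ≤ M)
    (hcont : σ {θ | ¬ ContinuousAt h θ} = 0) :
    VagueTendsto
      (fun n => Measure.map (fun ω => (‖X ω‖ * h (Θ ω) / b n, Θ ω)) ((n : ENNReal) • P))
      ((mAlpha α).prod (σ.withDensity fun θ => ENNReal.ofReal (h θ ^ α))) := by
  intro f hf ⟨C, hC⟩ ⟨ε, hε, hfε⟩
  obtain ⟨M, hM, hhM⟩ : ∃ M > 0, ∀ θ, h θ ≤ M :=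
    let ⟨M, hM⟩ := hbdd; ⟨max M 1, by positivity, fun θ => (hM θ).trans (le_max_left _ _)⟩
  have hT := measurable_radialScale hmeas
  have hmap (n : ℕ) : Measure.map (fun ω => (‖X ω‖ * h (Θ ω) / b n, Θ ω)) ((n : ENNReal) • P)
      = (Measure.map (fun ω => (‖X ω‖ / b n, Θ ω)) ((n : ENNReal) • P)).map (radialScale h) := by
    rw [Measure.map_map hT ((hX.norm.div_const _).prodMk hΘmeas)]
    congr with ω <;> simp [radialScale, div_mul_eq_mul_div]
  have (n : ℕ) : IsFiniteMeasure ((n : ENNReal) • P) := ⟨by simp⟩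
  simp_rw [hmap, integral_map hT.aemeasurable hf.aestronglyMeasurable]
  rw [← integral_comp_radialScale hα σ hmeas hnonneg hM hhM hf.measurable hε hC hfε]
  exact hRV.tendsto_integral_of_ae_continuousAt (div_pos hε hM)
    (fun δ hδ => mAlpha_prod_lt_fst_ne_top hα hδ σ) (hf.measurable.comp hT) (fun p => hC _)
    (lt_fst_of_comp_radialScale_ne_zero hε.le hM hnonneg hhM hfε)
    (ae_continuousAt_comp_radialScale _ hcont hf)

/-- Theorem 2: if `X` has a regularly varying tail of index `α` with spectral measure
`σ` (vague convergence of `Q_n = n·P((‖X‖/b_n, X/‖X‖) ∈ ·)` to `m_α × σ`) and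
`h : S^{d-1} → ℝ₊` is bounded and continuous `σ`-a.e., then `Y = X·h(X/‖X‖)` has a
regularly varying tail with the same index `α` and spectral measure `μ`, `dμ/dσ = h^α`. -/
theorem radial_transformation_regularly_varying
    {d : ℕ} {Ω : Type*} [MeasurableSpace Ω] (P : Measure Ω) [IsProbabilityMeasure P]
    (X : Ω → EuclideanSpace ℝ (Fin d)) (hX : Measurable X)
    (Θ : Ω → Metric.sphere (0 : EuclideanSpace ℝ (Fin d)) 1) (hΘmeas : Measurable Θ)
    (hΘ : ∀ ω, (Θ ω : EuclideanSpace ℝ (Fin d)) = ‖X ω‖⁻¹ • X ω)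
    (σ : Measure (Metric.sphere (0 : EuclideanSpace ℝ (Fin d)) 1)) [IsFiniteMeasure σ]
    (α : ℝ) (hα : 0 < α)
    (b : ℕ → ℝ) (hbpos : ∀ n, 0 < b n)
    (Lt : ℝ → ℝ) (hLt : ∀ t > 0, Tendsto (fun x => Lt (t * x) / Lt x) atTop (nhds 1))
    (hb : ∀ n : ℕ, b n = (n : ℝ) ^ (α⁻¹) * Lt n)
    (hRV : VagueTendsto
      (fun n => Measure.map (fun ω => (‖X ω‖ / b n, Θ ω)) ((n : ENNReal) • P))
      ((mAlpha α).prod σ))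
    (h : Metric.sphere (0 : EuclideanSpace ℝ (Fin d)) 1 → ℝ)
    (hmeas : Measurable h) (hnonneg : ∀ θ, 0 ≤ h θ)
    (hbdd : ∃ M : ℝ, ∀ θ, h θ ≤ M)
    (hcont : σ {θ | ¬ ContinuousAt h θ} = 0) :
    VagueTendsto
      (fun n => Measure.map (fun ω => (‖X ω‖ * h (Θ ω) / b n, Θ ω)) ((n : ENNReal) • P))
      ((mAlpha α).prod (σ.withDensity fun θ => ENNReal.ofReal (h θ ^ α))) :=
  radial_transformation_regularly_varying_general P X hX Θ hΘmeas σ α hα b hRV h hmeas hnonneg hbdd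
    hcont
end

section
/- Let X be a random vector in ℝ^2 with regularly varying tail of index α and uniform spectral measure σ on S^1 ≅ [0, 2π) (dσ/dθ = 1/(2π)). Let μ be a probability measure on [0, 2π) with distribution function F(x) = μ([0,x]) and quantile function F⁻¹, and suppose F⁻¹ is continuous Lebesgue-almost everywhere on [0,1). Then the random vector Y with polar decomposition (‖X‖, F⁻¹(Θ/(2π))), where Θ ∈ [0,2π) is the angular part of X, has a regularly varying tail with the same index α and spectral measure μ. -/
open Set Topology MeasureTheory Filter Real

/-- Distribution function `F(x) = μ([0,x])` of a measure on `[0,2π)`. -/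
noncomputable def distF (μ : Measure ℝ) (x : ℝ) : ℝ := (μ (Set.Icc 0 x)).toReal

/-- Generalized inverse (quantile function) of `distF μ`. -/
noncomputable def quantileF (μ : Measure ℝ) (u : ℝ) : ℝ :=
  sInf {x : ℝ | 0 ≤ x ∧ u ≤ distF μ x}

/-! The uniform law on `[0, 2π)` is carried to the uniform law on `[0, 1)` by `θ ↦ θ / 2π`, and
that one to `μ` by the quantile function (inverse transform sampling: `F⁻¹ u ≤ x ↔ u ≤ F x`).
Both maps are continuous almost everywhere, so the preimage `B'` of a `μ`-continuity set `B` is a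
continuity set of the uniform law with the same mass as `B`, and `{F⁻¹(Θ/2π) ∈ B} = {Θ ∈ B'}`:
the tail limit of `X` on `B'` is the tail limit of `Y` on `B`. -/

open ProbabilityTheory

section Quantile

variable {μ : Measure ℝ} {b u x : ℝ}

lemma measure_Iio_zero_of_compl_Icc (hμ : μ (Icc 0 b)ᶜ = 0) : μ (Iio 0) = 0 :=
  measure_mono_null (fun _ hx => notMem_Icc_of_lt hx) hμ

lemma quantileF_nonneg (μ : Measure ℝ) (u : ℝ) : 0 ≤ quantileF μ u :=
  Real.sInf_nonneg fun _ hx => hx.1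

lemma quantileF_le_of_le_distF (hx : 0 ≤ x) (hu : u ≤ distF μ x) : quantileF μ u ≤ x :=
  csInf_le ⟨0, fun _ hy => hy.1⟩ ⟨hx, hu⟩

lemma distF_mono [IsFiniteMeasure μ] : Monotone (distF μ) := fun _ _ hxy =>
  ENNReal.toReal_mono (measure_ne_top μ _) (measure_mono (Icc_subset_Icc_right hxy))

variable [IsProbabilityMeasure μ]

lemma distF_le_one : distF μ x ≤ 1 := measureReal_le_one

lemma distF_eq_cdf (hμ : μ (Iio 0) = 0) (x : ℝ) : distF μ x = cdf μ x := by
  rw [cdf_eq_real, distF, ← Iic_inter_Ici, measure_inter_conull (by rwa [compl_Ici]),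
    measureReal_def]

/-- Right-continuity of `distF μ` puts the infimum defining `quantileF μ u` in its own set. -/
lemma le_distF_quantileF (hμ : μ (Iio 0) = 0) (hne : {x | 0 ≤ x ∧ u ≤ distF μ x}.Nonempty) :
    u ≤ distF μ (quantileF μ u) := by
  have hq := quantileF_nonneg μ u
  have hright : ∀ᶠ x in 𝓝[>] (quantileF μ u), u ≤ cdf μ x := by
    filter_upwards [self_mem_nhdsWithin] with x (hx : quantileF μ u < x)
    obtain ⟨y, ⟨hy0, hyu⟩, hyx⟩ := exists_lt_of_csInf_lt hne hx
    rw [← distF_eq_cdf hμ x]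
    exact hyu.trans (distF_mono hyx.le)
  rw [distF_eq_cdf hμ]
  exact ge_of_tendsto (((cdf μ).right_continuous _).mono Ioi_subset_Ici_self) hright

lemma quantileF_set_nonempty (hμ : μ (Icc 0 b)ᶜ = 0) (hu : u ≤ 1) :
    {x | 0 ≤ x ∧ u ≤ distF μ x}.Nonempty := by
  have hb : distF μ b = 1 := by
    rw [distF, (prob_compl_eq_zero_iff measurableSet_Icc).1 hμ, ENNReal.toReal_one]
  exact ⟨max b 0, le_max_right b 0, hu.trans (hb ▸ distF_mono (le_max_left b 0))⟩

lemma quantileF_le_iff (hμ : μ (Icc 0 b)ᶜ = 0) (hu : u ≤ 1) (hx : 0 ≤ x) :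
    quantileF μ u ≤ x ↔ u ≤ distF μ x :=
  ⟨fun h => (le_distF_quantileF (measure_Iio_zero_of_compl_Icc hμ)
      (quantileF_set_nonempty hμ hu)).trans (distF_mono h),
    quantileF_le_of_le_distF hx⟩

lemma quantileF_of_one_lt (hu : 1 < u) : quantileF μ u = 0 := by
  have : {x | 0 ≤ x ∧ u ≤ distF μ x} = ∅ :=
    eq_empty_of_forall_notMem fun _ hx => (hu.trans_le hx.2).not_ge distF_le_one
  rw [quantileF, this, Real.sInf_empty]

lemma monotone_quantileF_min_one (hμ : μ (Icc 0 b)ᶜ = 0) :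
    Monotone fun u => quantileF μ (min u 1) := fun _ v huv =>
  csInf_le_csInf ⟨0, fun _ hy => hy.1⟩ (quantileF_set_nonempty hμ (min_le_right v 1))
    fun _ hy => ⟨hy.1, (min_le_min_right 1 huv).trans hy.2⟩

lemma measurable_quantileF (hμ : μ (Icc 0 b)ᶜ = 0) : Measurable (quantileF μ) := by
  have : quantileF μ = (Iic 1).indicator fun u => quantileF μ (min u 1) := by
    ext u
    by_cases hu : u ≤ 1
    · simp [hu]
    · simp [hu, quantileF_of_one_lt (not_le.1 hu)]
  rw [this]
  exact (monotone_quantileF_min_one hμ).measurable.indicator measurableSet_Iic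

theorem map_quantileF_volume (hμ : μ (Icc 0 b)ᶜ = 0) :
    (volume.restrict (Ico 0 1)).map (quantileF μ) = μ := by
  have hIio := measure_Iio_zero_of_compl_Icc hμ
  refine Measure.ext_of_Iic _ _ fun x => ?_
  rw [Measure.map_apply (measurable_quantileF hμ) measurableSet_Iic,
    Measure.restrict_apply' measurableSet_Ico]
  rcases lt_or_ge x 0 with hx | hx
  · have hempty : quantileF μ ⁻¹' Iic x = ∅ :=
      eq_empty_of_forall_notMem fun u hu => (quantileF_nonneg μ u).not_gt (lt_of_le_of_lt hu hx)
    rw [hempty, empty_inter, measure_empty, eq_comm]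
    exact measure_mono_null (Iic_subset_Iio.2 hx) hIio
  · have hpre : quantileF μ ⁻¹' Iic x ∩ Ico 0 1 = Iic (distF μ x) ∩ Ico 0 1 := by
      ext u
      exact and_congr_left fun hu => quantileF_le_iff hμ hu.2.le hx
    rw [hpre, inter_comm, ← measure_congr ((ae_eq_refl _).inter Iio_ae_eq_Iic), Ico_inter_Iio,
      Real.volume_Ico, min_eq_right distF_le_one, sub_zero,
      ← measure_inter_conull (t := Ici 0) (by rwa [compl_Ici]), Iic_inter_Ici, distF,
      ENNReal.ofReal_toReal (measure_ne_top _ _)]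

end Quantile

lemma frontier_preimage_subset_setOf_not_continuousAt_union {X Y : Type*} [TopologicalSpace X]
    [TopologicalSpace Y] (f : X → Y) (s : Set Y) :
    frontier (f ⁻¹' s) ⊆ {x | ¬ContinuousAt f x} ∪ f ⁻¹' frontier s := by
  intro x hx
  by_cases hf : ContinuousAt f x
  · have hcl : ∀ t : Set Y, x ∈ closure (f ⁻¹' t) → f x ∈ closure t := fun t ht =>
      closure_mono (image_preimage_subset f t) (mem_closure_image hf ht)
    rw [frontier_eq_closure_inter_closure] at hx
    exact Or.inr (frontier_eq_closure_inter_closure (s := s) ▸ ⟨hcl s hx.1, hcl sᶜ hx.2⟩)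
  · exact Or.inl hf

lemma map_div_volume_restrict_Ico {c : ℝ} (hc : 0 < c) :
    (ENNReal.ofReal c⁻¹ • volume.restrict (Ico 0 c)).map (fun θ => θ / c) =
      volume.restrict (Ico 0 1) := by
  have hf : Measurable fun θ : ℝ => θ / c := measurable_id.div_const c
  have hIco : (fun θ : ℝ => θ / c) ⁻¹' Ico 0 1 = Ico 0 c := by
    ext θ
    simp [le_div_iff₀ hc, div_lt_one hc]
  ext s hs
  rw [Measure.map_apply hf hs, Measure.smul_apply, Measure.restrict_apply (hf hs),
    Measure.restrict_apply hs, ← hIco, ← preimage_inter, smul_eq_mul]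
  simp_rw [div_eq_mul_inv]
  rw [Real.volume_preimage_mul_right (inv_ne_zero hc.ne'), inv_inv, abs_of_pos hc, ← mul_assoc,
    ← ENNReal.ofReal_mul (inv_nonneg.2 hc.le), inv_mul_cancel₀ hc.ne', ENNReal.ofReal_one,
    one_mul]

/-- Regular variation with spectral measure `σ`: `(R, Θ)` are the polar coordinates of the vector
and `c x = x ^ α / L x`. -/
def HasTailSpectralMeasure {Ω A : Type*} [MeasurableSpace Ω] [MeasurableSpace A]
    [TopologicalSpace A] (P : Measure Ω) (R : Ω → ℝ) (Θ : Ω → A) (c : ℝ → ℝ)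
    (σ : Measure A) : Prop :=
  ∀ B : Set A, MeasurableSet B → σ (frontier B) = 0 →
    Tendsto (fun x : ℝ => c x * (P {ω | Θ ω ∈ B ∧ x < R ω}).toReal) atTop (𝓝 (σ B).toReal)

/-- A `σ`-continuity set pulls back under a `σ`-a.e. continuous map to a `σ`-continuity set. -/
theorem HasTailSpectralMeasure.comp {Ω A A' : Type*} [MeasurableSpace Ω] [MeasurableSpace A]
    [TopologicalSpace A] [MeasurableSpace A'] [TopologicalSpace A'] [OpensMeasurableSpace A']
    {P : Measure Ω} {R : Ω → ℝ} {Θ : Ω → A} {c : ℝ → ℝ} {σ : Measure A} {σ' : Measure A'}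
    {f : A → A'} (h : HasTailSpectralMeasure P R Θ c σ) (hf : Measurable f)
    (hmap : σ.map f = σ') (hcont : σ {x | ¬ContinuousAt f x} = 0) :
    HasTailSpectralMeasure P R (f ∘ Θ) c σ' := by
  intro B hB hσ'B
  have hfront : σ (frontier (f ⁻¹' B)) = 0 := by
    refine measure_mono_null (frontier_preimage_subset_setOf_not_continuousAt_union f B)
      (measure_union_null hcont ?_)
    rwa [← Measure.map_apply hf isClosed_frontier.measurableSet, hmap]
  have := h (f ⁻¹' B) (hf hB) hfront
  rwa [← Measure.map_apply hf hB, hmap] at this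

theorem quantile_transform_regularly_varying_general
    {Ω : Type*} [MeasurableSpace Ω] (P : Measure Ω)
    (X : Ω → EuclideanSpace ℝ (Fin 2))
    (Θ : Ω → ℝ)
    (α : ℝ) (L : ℝ → ℝ)
    (hRV : ∀ B : Set ℝ, MeasurableSet B →
      (ENNReal.ofReal (2 * π)⁻¹ • volume.restrict (Set.Ico 0 (2 * π))) (frontier B) = 0 →
      Tendsto (fun x : ℝ => x ^ α / L x * (P {ω | Θ ω ∈ B ∧ x < ‖X ω‖}).toReal)
        atTop (nhds
          (((ENNReal.ofReal (2 * π)⁻¹ • volume.restrict (Set.Ico 0 (2 * π))) B).toReal)))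
    (μ : Measure ℝ) [IsProbabilityMeasure μ] (hμsupp : μ (Set.Ico 0 (2 * π))ᶜ = 0)
    (hqcont : volume ({u : ℝ | ¬ ContinuousAt (quantileF μ) u} ∩ Set.Ico 0 1) = 0) :
    ∀ B : Set ℝ, MeasurableSet B → μ (frontier B) = 0 →
      Tendsto (fun x : ℝ =>
          x ^ α / L x * (P {ω | quantileF μ (Θ ω / (2 * π)) ∈ B ∧ x < ‖X ω‖}).toReal)
        atTop (nhds ((μ B).toReal)) := by
  have hμ : μ (Icc 0 (2 * π))ᶜ = 0 :=
    measure_mono_null (compl_subset_compl.2 Ico_subset_Icc_self) hμsupp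
  have hdiv : Continuous fun θ : ℝ => θ / (2 * π) := continuous_id.div_const _
  have hdiv_discont : {θ | ¬ContinuousAt (fun θ : ℝ => θ / (2 * π)) θ} = ∅ :=
    eq_empty_of_forall_notMem fun _ hθ => hθ hdiv.continuousAt
  have hunif : HasTailSpectralMeasure P (fun ω => ‖X ω‖) (fun ω => Θ ω / (2 * π))
      (fun x => x ^ α / L x) (volume.restrict (Ico 0 1)) :=
    HasTailSpectralMeasure.comp (f := fun θ => θ / (2 * π)) hRV hdiv.measurable
      (map_div_volume_restrict_Ico (by positivity)) (by rw [hdiv_discont, measure_empty])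
  have hY : HasTailSpectralMeasure P (fun ω => ‖X ω‖) (quantileF μ ∘ fun ω => Θ ω / (2 * π))
      (fun x => x ^ α / L x) μ :=
    hunif.comp (measurable_quantileF hμ) (map_quantileF_volume hμ)
      (by rwa [Measure.restrict_apply' measurableSet_Ico])
  exact hY

/-- Corollary 1: if `X` in `ℝ²` has regularly varying tail of index `α` with uniform
spectral measure on `S¹ ≅ [0,2π)`, `μ` is a probability measure on `[0,2π)` whose
quantile function `F⁻¹` is continuous Lebesgue-a.e. on `[0,1)`, then
`Y = (‖X‖, F⁻¹(Θ/(2π)))` (in polar coordinates, `Θ` the angular part of `X`) has a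
regularly varying tail with the same index `α` and spectral measure `μ`. -/
theorem quantile_transform_regularly_varying
    {Ω : Type*} [MeasurableSpace Ω] (P : Measure Ω) [IsProbabilityMeasure P]
    (X : Ω → EuclideanSpace ℝ (Fin 2)) (hX : Measurable X)
    (Θ : Ω → ℝ) (hΘmeas : Measurable Θ)
    (hΘrange : ∀ ω, Θ ω ∈ Set.Ico (0 : ℝ) (2 * π))
    (hΘ : ∀ ω, X ω 0 = ‖X ω‖ * Real.cos (Θ ω) ∧ X ω 1 = ‖X ω‖ * Real.sin (Θ ω))
    (α : ℝ) (hα : 0 < α) (L : ℝ → ℝ) (hLpos : ∀ x > 0, 0 < L x)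
    (hL : ∀ t > 0, Tendsto (fun x => L (t * x) / L x) atTop (nhds 1))
    (hRV : ∀ B : Set ℝ, MeasurableSet B →
      (ENNReal.ofReal (2 * π)⁻¹ • volume.restrict (Set.Ico 0 (2 * π))) (frontier B) = 0 →
      Tendsto (fun x : ℝ => x ^ α / L x * (P {ω | Θ ω ∈ B ∧ x < ‖X ω‖}).toReal)
        atTop (nhds
          (((ENNReal.ofReal (2 * π)⁻¹ • volume.restrict (Set.Ico 0 (2 * π))) B).toReal)))
    (μ : Measure ℝ) [IsProbabilityMeasure μ] (hμsupp : μ (Set.Ico 0 (2 * π))ᶜ = 0)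
    (hqcont : volume ({u : ℝ | ¬ ContinuousAt (quantileF μ) u} ∩ Set.Ico 0 1) = 0) :
    ∀ B : Set ℝ, MeasurableSet B → μ (frontier B) = 0 →
      Tendsto (fun x : ℝ =>
          x ^ α / L x * (P {ω | quantileF μ (Θ ω / (2 * π)) ∈ B ∧ x < ‖X ω‖}).toReal)
        atTop (nhds ((μ B).toReal)) :=
  quantile_transform_regularly_varying_general P X Θ α L hRV μ hμsupp hqcont
end
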